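/- arXiv:2302.09435 — 6 statements merged into one kernel-verified Lean document; each statement's English description precedes it below -/
import Mathlib

section
/- Let O be a convex valuation subring of an ordered field K and exp : O → O a strictly increasing group homomorphism from (O,+) to (K^{>0},·) such that for every y ∈ O with y > 1 there exists x ∈ O with exp(x) = y. Then the image of exp equals the set of positive units of O: exp(O) = (O×)^{>0}. -/
/-- Let `O` be a convex valuation subring of an ordered field `K` and
`exp : O → O` a strictly increasing group homomorphism from `(O, +)` to
`(K^{>0}, ·)` such that every `y ∈ O` with `y > 1` is a value of `exp`.
Then the image of `exp` is exactly the set `(O×)^{>0}` of positive units of `O`. -/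
theorem partial_exp_image_eq_positive_units {K : Type*} [Field K] [LinearOrder K] [IsStrictOrderedRing K]
    (O : Subring K)
    (hconv : ∀ a b c : K, a ∈ O → c ∈ O → a ≤ b → b ≤ c → b ∈ O)
    (hval : ∀ x : K, x ≠ 0 → x ∈ O ∨ x⁻¹ ∈ O)
    (exp : K → K)
    (hmap : ∀ x : K, x ∈ O → exp x ∈ O)
    (hom : ∀ x y : K, x ∈ O → y ∈ O → exp (x + y) = exp x * exp y)
    (hexppos : ∀ x : K, x ∈ O → 0 < exp x)
    (hmono : ∀ x y : K, x ∈ O → y ∈ O → x < y → exp x < exp y)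
    (hsurj : ∀ y : K, y ∈ O → 1 < y → ∃ x : K, x ∈ O ∧ exp x = y) :
    ∀ y : K, (∃ x : K, x ∈ O ∧ exp x = y) ↔ (y ∈ O ∧ y⁻¹ ∈ O ∧ 0 < y) := by
  have h0 : (0 : K) ∈ O := O.zero_mem
  have hexp0 : exp 0 = 1 := by
    have h := hom 0 0 h0 h0
    have hp := hexppos 0 h0
    rw [zero_add] at h
    nlinarith
  have hinv : ∀ x : K, x ∈ O → exp x * exp (-x) = 1 := by
    intro x hx
    have := hom x (-x) hx (O.neg_mem hx)
    simpa [hexp0] using this.symm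
  intro y
  constructor
  · rintro ⟨x, hx, rfl⟩
    refine ⟨hmap x hx, ?_, hexppos x hx⟩
    have h := hinv x hx
    rw [inv_eq_of_mul_eq_one_right (hinv x hx)]
    exact hmap _ (O.neg_mem hx)
  · rintro ⟨hy, hyi, hypos⟩
    rcases lt_trichotomy y 1 with h1 | h1 | h1
    · have hyi1 : 1 < y⁻¹ := (one_lt_inv₀ hypos).mpr h1
      obtain ⟨x, hx, hex⟩ := hsurj y⁻¹ hyi hyi1
      refine ⟨-x, O.neg_mem hx, ?_⟩
      have h := hinv x hx
      rw [hex] at h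
      field_simp at h
      linarith
    · exact ⟨0, h0, by rw [hexp0, h1]⟩
    · exact hsurj y hy h1
end

section
/- Let F ⊆ K be ordered fields with F real closed, let w denote the natural valuation on K (induced by the convex hull of ℚ), and let x ∈ K \ F. If w(F(x)×) ≠ w(F×), then there exists a ∈ F such that w(x - a) ∉ w(F×). -/
/-- The natural valuation ring of an ordered field: the convex hull of `ℚ`,
i.e. the set of elements bounded in absolute value by a natural number. -/
def naturalValuationRing (K : Type*) [Field K] [LinearOrder K] [IsStrictOrderedRing K] : Set K :=
  {x | ∃ n : ℕ, |x| ≤ (n : K)}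

/-- Two nonzero elements have the same natural valuation `w a = w b` iff `a / b`
is a unit of the natural valuation ring, i.e. both `a / b` and `b / a` are
bounded. -/
def sameNatVal {K : Type*} [Field K] [LinearOrder K] [IsStrictOrderedRing K] (a b : K) : Prop :=
  a / b ∈ naturalValuationRing K ∧ b / a ∈ naturalValuationRing K

open Polynomial Module


lemma irr_factor_deg {F : Type*} [Field F] {p g : F[X]} (hp : Irreducible p)
    (hg : g ∣ p) (hgu : ¬ IsUnit g) : g.natDegree = p.natDegree := by
  obtain ⟨t, ht⟩ := hg
  rcases hp.isUnit_or_isUnit ht with h | h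
  · exact absurd h hgu
  · have h0 : t.natDegree = 0 := natDegree_eq_zero_of_isUnit h
    have hg0 : g ≠ 0 := by rintro rfl; exact hp.ne_zero (by simp [ht])
    have ht0 : t ≠ 0 := h.ne_zero
    rw [ht, natDegree_mul hg0 ht0, h0, add_zero]

lemma irred_root_deg_one {F : Type*} [Field F] {p : F[X]} (hp : Irreducible p)
    {z : F} (hz : p.eval z = 0) : p.natDegree = 1 := by
  have hdvd : (X - C z) ∣ p := dvd_iff_isRoot.mpr hz
  have := irr_factor_deg hp hdvd (not_isUnit_X_sub_C z)
  simpa using this.symm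


lemma mem_adjoin_i {R L : Type*} [Field R] [LinearOrder R] [IsStrictOrderedRing R] [Field L] [Algebra R L]
    {i : L} (hi2 : i * i = -1) {z : L}
    (hz : z ∈ IntermediateField.adjoin R ({i} : Set L)) :
    ∃ u v : R, z = algebraMap R L u + algebraMap R L v * i := by
  induction hz using IntermediateField.adjoin_induction with
  | mem w hw =>
    rcases hw with rfl
    exact ⟨0, 1, by simp⟩
  | algebraMap r => exact ⟨r, 0, by simp⟩
  | add y₁ y₂ h₁ h₂ ih₁ ih₂ =>
    obtain ⟨u, v, rfl⟩ := ih₁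
    obtain ⟨u', v', rfl⟩ := ih₂
    exact ⟨u + u', v + v', by rw [map_add, map_add]; ring⟩
  | mul y₁ y₂ h₁ h₂ ih₁ ih₂ =>
    obtain ⟨u, v, rfl⟩ := ih₁
    obtain ⟨u', v', rfl⟩ := ih₂
    refine ⟨u * u' - v * v', u * v' + u' * v, ?_⟩
    rw [map_sub, map_add, map_mul, map_mul, map_mul, map_mul]
    linear_combination (algebraMap R L v * algebraMap R L v') * hi2
  | inv y hy ih =>
    obtain ⟨u, v, rfl⟩ := ih
    by_cases h0 : u = 0 ∧ v = 0
    · exact ⟨0, 0, by simp [h0.1, h0.2]⟩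
    · have hS : u * u + v * v ≠ 0 := by
        rcases not_and_or.mp h0 with h | h
        · nlinarith [mul_self_nonneg u, mul_self_nonneg v, mul_self_pos.mpr h]
        · nlinarith [mul_self_nonneg u, mul_self_nonneg v, mul_self_pos.mpr h]
      have hS' : algebraMap R L (u * u + v * v) ≠ 0 :=
        fun h => hS ((injective_iff_map_eq_zero _).mp (algebraMap R L).injective _ h)
      have hkey : (algebraMap R L u + algebraMap R L v * i) *
          (algebraMap R L u - algebraMap R L v * i)
          = algebraMap R L (u * u + v * v) := by
        rw [map_add, map_mul, map_mul]
        linear_combination (-(algebraMap R L v * algebraMap R L v)) * hi2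
      refine ⟨u / (u * u + v * v), -v / (u * u + v * v), ?_⟩
      rw [map_div₀, map_div₀, map_neg]
      rw [inv_eq_of_mul_eq_one_right (show (algebraMap R L u + algebraMap R L v * i) *
        ((algebraMap R L u - algebraMap R L v * i) / algebraMap R L (u * u + v * v)) = 1 by
          rw [mul_div_assoc', hkey, div_self hS'])]
      field_simp
      ring

lemma sq_adjoin_i {R L : Type*} [Field R] [LinearOrder R] [IsStrictOrderedRing R] [Field L] [Algebra R L]
    (hsq' : ∀ y : R, 0 ≤ y → ∃ z : R, z * z = y)
    {i : L} (hi2 : i * i = -1)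
    (z : ↥(IntermediateField.adjoin R ({i} : Set L))) :
    ∃ s : ↥(IntermediateField.adjoin R ({i} : Set L)), s * s = z := by
  obtain ⟨u, v, hzuv⟩ := mem_adjoin_i hi2 z.2
  obtain ⟨r0, hr0⟩ := hsq' (u * u + v * v)
    (by nlinarith [mul_self_nonneg u, mul_self_nonneg v])
  have hr : |r0| * |r0| = u * u + v * v := by rw [abs_mul_abs_self]; exact hr0
  set r := |r0| with hrdef
  have hrnn : 0 ≤ r := abs_nonneg r0
  have hru : |u| ≤ r := by nlinarith [abs_nonneg u, abs_mul_abs_self u, mul_self_nonneg v]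
  have h1 : 0 ≤ (r + u) / 2 := by
    have := neg_abs_le u; linarith
  have h2 : 0 ≤ (r - u) / 2 := by
    have := le_abs_self u; linarith
  obtain ⟨a, ha⟩ := hsq' _ h1
  obtain ⟨b, hb⟩ := hsq' _ h2
  have hab : (2 * (a * b)) * (2 * (a * b)) = v * v := by nlinarith [ha, hb, hr]
  have hor := mul_self_eq_mul_self_iff.mp hab
  obtain ⟨b', hbb', hab'⟩ : ∃ b', b' * b' = (r - u) / 2 ∧ 2 * (a * b') = v := by
    rcases hor with h | h
    · exact ⟨b, hb, h⟩
    · exact ⟨-b, by rw [neg_mul_neg]; exact hb, by rw [mul_neg, mul_neg]; linarith⟩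
  refine ⟨⟨algebraMap R L a + algebraMap R L b' * i,
    add_mem (IntermediateField.algebraMap_mem _ _)
      (mul_mem (IntermediateField.algebraMap_mem _ _)
        (IntermediateField.subset_adjoin R {i} rfl))⟩, ?_⟩
  apply Subtype.ext
  rw [MulMemClass.coe_mul]
  show (algebraMap R L a + algebraMap R L b' * i) *
    (algebraMap R L a + algebraMap R L b' * i) = (z : L)
  rw [hzuv]
  have hA : algebraMap R L a * algebraMap R L a -
      algebraMap R L b' * algebraMap R L b' = algebraMap R L u := by
    rw [← map_mul, ← map_mul, ← map_sub]
    congr 1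
    rw [ha, hbb']; ring
  have hB : 2 * (algebraMap R L a * algebraMap R L b') = algebraMap R L v := by
    rw [← hab', map_mul, map_mul, map_ofNat]
  linear_combination hA + hB * i + (algebraMap R L b' * algebraMap R L b') * hi2

theorem quad_aux {K₂ A : Type*} [Field K₂] [CharZero K₂] [Field A] [Algebra K₂ A]
    (hsq2 : ∀ z : K₂, ∃ s : K₂, s * s = z) (α : A) (hint : IsIntegral K₂ α)
    (hdeg : (minpoly K₂ α).natDegree = 2) : False := by
  set p := minpoly K₂ α with hpdef
  have hmon : p.Monic := minpoly.monic hint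
  set b := p.coeff 1 with hb
  set c := p.coeff 0 with hc
  have hp : p = X ^ 2 + C b * X + C c := by
    ext n
    rcases n with _ | _ | _ | n
    · simp [coeff_X_pow]; rfl
    · simp [coeff_X_pow]; rfl
    · have : p.coeff 2 = 1 := by
        have := hmon.coeff_natDegree
        rwa [hdeg] at this
      simp [coeff_X_pow, this]
    · have h1 : p.coeff (n + 3) = 0 := coeff_eq_zero_of_natDegree_lt (by omega)
      have : ((X : K₂[X]) ^ 2 + C b * X + C c).coeff (n + 3) = 0 := by
        simp [coeff_X_pow, coeff_C]
      rw [h1, this]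
  have haev : α ^ 2 + algebraMap K₂ A b * α + algebraMap K₂ A c = 0 := by
    have := minpoly.aeval K₂ α
    rw [← hpdef, hp] at this
    simpa [Algebra.smul_def] using this
  haveI : CharZero A := charZero_of_injective_algebraMap (algebraMap K₂ A).injective
  obtain ⟨s, hs⟩ := hsq2 (b * b - 4 * c)
  have hfac : (2 * α + algebraMap K₂ A b - algebraMap K₂ A s) *
      (2 * α + algebraMap K₂ A b + algebraMap K₂ A s) = 0 := by
    have hs' : algebraMap K₂ A s * algebraMap K₂ A s
        = algebraMap K₂ A b * algebraMap K₂ A b - 4 * algebraMap K₂ A c := by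
      rw [← map_mul]; rw [hs]; push_cast [map_sub, map_mul, map_ofNat]; ring
    linear_combination 4 * haev - hs'
  have h2 : (algebraMap K₂ A) 2 = 2 := map_ofNat _ 2
  have hmem : ∃ k : K₂, α = algebraMap K₂ A k := by
    rcases mul_eq_zero.mp hfac with h | h
    · refine ⟨(s - b) / 2, ?_⟩
      rw [map_div₀, map_sub, h2, eq_div_iff (two_ne_zero)]
      linear_combination h
    · refine ⟨(-s - b) / 2, ?_⟩
      rw [map_div₀, map_sub, map_neg, h2, eq_div_iff (two_ne_zero)]
      linear_combination h
  obtain ⟨k, rfl⟩ := hmem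
  have : (minpoly K₂ (algebraMap K₂ A k)).natDegree = 1 := by
    rw [minpoly.eq_X_sub_C]; simp
  rw [← hpdef] at this
  omega

theorem irr_deg_le_two {R : Type*} [Field R] [LinearOrder R] [IsStrictOrderedRing R]
    (hsq' : ∀ y : R, 0 ≤ y → ∃ z : R, z * z = y)
    (hodd' : ∀ q : R[X], Odd q.natDegree → ∃ z : R, q.eval z = 0)
    {p : R[X]} (hp : Irreducible p) : p.natDegree ≤ 2 := by
  classical
  haveI : Fact (Nat.Prime 2) := ⟨Nat.prime_two⟩
  have hp0 : p ≠ 0 := hp.ne_zero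
  set q : R[X] := (X ^ 2 + C 1) * p with hq
  have hx21 : (X ^ 2 + C 1 : R[X]) ≠ 0 := X_pow_add_C_ne_zero (by norm_num) 1
  have hdeg21 : (X ^ 2 + C 1 : R[X]).degree = 2 := degree_X_pow_add_C (by norm_num) 1
  have hq0 : q ≠ 0 := mul_ne_zero hx21 hp0
  set L := q.SplittingField with hL
  haveI : IsGalois R L := ⟨⟩
  have hsp := SplittingField.splits q
  obtain ⟨hs1, hs2⟩ := (splits_mul (Polynomial.map_ne_zero hx21) (Polynomial.map_ne_zero hp0)).mp
    (by rwa [Polynomial.map_mul] at hsp)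
  obtain ⟨i, hi⟩ := hs1.exists_eval_eq_zero (by rw [degree_map, hdeg21]; norm_num)
  have hi2 : i * i = -1 := by
    have : i ^ 2 + 1 = 0 := by simpa using hi
    linear_combination this - sq i
  -- Step 2 : finrank R L is a power of 2
  set G := L ≃ₐ[R] L with hG
  have hcard : Fintype.card G = finrank R L := by
    rw [Fintype.card_eq_nat_card]; exact IsGalois.card_aut_eq_finrank R L
  obtain ⟨P⟩ : Nonempty (Sylow 2 G) := Sylow.nonempty
  set E := IntermediateField.fixedField (P : Subgroup G) with hE
  have hEL : finrank ↥E L = Fintype.card (P : Subgroup G) := by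
    rw [Fintype.card_eq_nat_card]; exact IntermediateField.finrank_fixedField_eq_card _
  have htower : finrank R ↥E * finrank ↥E L = finrank R L :=
    finrank_mul_finrank R ↥E L
  have hPcard : Nat.card (P : Subgroup G) = 2 ^ (Nat.card G).factorization 2 :=
    Sylow.card_eq_multiplicity P
  have hNcard : Nat.card G = finrank R L := by rw [Nat.card_eq_fintype_card, hcard]
  have hN0 : finrank R L ≠ 0 := (finrank_pos (R := R) (M := L)).ne'
  obtain ⟨k, hk⟩ : ∃ k, (Nat.card G).factorization 2 = k := ⟨_, rfl⟩
  have hEL2 : finrank ↥E L = 2 ^ k := by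
    rw [hEL, ← Nat.card_eq_fintype_card, hPcard, hk]
  have hoddE : ¬ 2 ∣ finrank R ↥E := by
    intro hdvd
    have h1 : 2 ^ (k + 1) ∣ Nat.card G := by
      obtain ⟨t, ht⟩ := hdvd
      refine ⟨t, ?_⟩
      rw [hNcard, ← htower, hEL2, ht, pow_succ]
      ring
    rw [← hk] at h1
    exact Nat.pow_succ_factorization_not_dvd (hNcard ▸ hN0) Nat.prime_two h1
  obtain ⟨α, hα⟩ := Field.exists_primitive_element R ↥E
  have hint : IsIntegral R α := IsIntegral.of_finite R α
  have hdegα : (minpoly R α).natDegree = finrank R ↥E := by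
    rw [← IntermediateField.adjoin.finrank hint, hα, IntermediateField.finrank_top']
  obtain ⟨z, hz⟩ := hodd' (minpoly R α) (by rw [hdegα, Nat.odd_iff]; omega)
  have hE1 : finrank R ↥E = 1 := by
    rw [← hdegα, irred_root_deg_one (minpoly.irreducible hint) hz]
  have hLpow : finrank R L = 2 ^ k := by
    rw [← htower, hE1, one_mul, hEL2]
  -- E₂ = R(i)
  set E₂ := IntermediateField.adjoin R ({i} : Set L) with hE2
  have hiE2 : i ∈ E₂ := IntermediateField.subset_adjoin R {i} rfl
  have hi_int : IsIntegral R i := IsIntegral.of_finite R i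
  have htower2 : finrank R ↥E₂ * finrank ↥E₂ L = finrank R L :=
    finrank_mul_finrank R ↥E₂ L
  have hfr2 : finrank R ↥E₂ ≤ 2 := by
    have hmp : minpoly R i ∣ (X ^ 2 + C 1) := minpoly.dvd R i (by simpa using hi)
    have h2 := natDegree_le_of_dvd hmp hx21
    rw [IntermediateField.adjoin.finrank hi_int]
    have h3 : (X ^ 2 + C (1:R)).natDegree = 2 := natDegree_X_pow_add_C
    omega
  have hdvdj : finrank ↥E₂ L ∣ 2 ^ k :=
    ⟨finrank R ↥E₂, by rw [← hLpow, ← htower2, mul_comm]⟩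
  obtain ⟨j, hjle, hj⟩ := (Nat.dvd_prime_pow Nat.prime_two).mp hdvdj
  rcases Nat.eq_zero_or_pos j with rfl | hjpos
  · -- L = E₂, so finrank R L ≤ 2 and p has a root in L
    rw [pow_zero] at hj
    have hL2 : finrank R L ≤ 2 := by rw [← htower2, hj, mul_one]; exact hfr2
    have hdp : p.degree ≠ 0 := degree_ne_of_natDegree_ne hp.natDegree_pos.ne'
    obtain ⟨β, hβ⟩ := hs2.exists_eval_eq_zero (by rwa [degree_map])
    have hβint : IsIntegral R β := IsIntegral.of_finite R β
    have hmdvd : minpoly R β ∣ p := minpoly.dvd R β (by simpa using hβ)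
    have hmdeg : (minpoly R β).natDegree = p.natDegree :=
      irr_factor_deg hp hmdvd (minpoly.not_isUnit R β)
    have htow4 : finrank R ↥(IntermediateField.adjoin R ({β} : Set L)) *
        finrank ↥(IntermediateField.adjoin R ({β} : Set L)) L = finrank R L :=
      finrank_mul_finrank _ _ _
    have hle : finrank R ↥(IntermediateField.adjoin R ({β} : Set L)) ≤ finrank R L :=
      Nat.le_of_dvd (Nat.pos_of_ne_zero hN0) ⟨_, htow4.symm⟩
    rw [← hmdeg, ← IntermediateField.adjoin.finrank hβint]
    exact hle.trans hL2
  · -- contradiction via quadratic extension of E₂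
    exfalso
    have sqE2 : ∀ z : ↥E₂, ∃ s : ↥E₂, s * s = z := fun z => sq_adjoin_i hsq' hi2 z
    -- quadratic subextension of L / E₂
    haveI : CharZero ↥E₂ := charZero_of_injective_algebraMap (algebraMap R ↥E₂).injective
    have hcard2 : Nat.card (L ≃ₐ[↥E₂] L) = 2 ^ j := by
      rw [IsGalois.card_aut_eq_finrank ↥E₂ L, hj]
    obtain ⟨Q, hQ⟩ := Sylow.exists_subgroup_card_pow_prime (G := L ≃ₐ[↥E₂] L) 2
      (n := j - 1) (by rw [hcard2]; exact pow_dvd_pow 2 (by omega))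
    set M := IntermediateField.fixedField Q with hM
    have hML : finrank ↥M L = 2 ^ (j - 1) := by
      rw [IntermediateField.finrank_fixedField_eq_card, hQ]
    have htow3 : finrank ↥E₂ ↥M * finrank ↥M L = finrank ↥E₂ L :=
      finrank_mul_finrank _ _ _
    have hM2 : finrank ↥E₂ ↥M = 2 := by
      rw [hML, hj] at htow3
      have hpow : (2:ℕ) ^ j = 2 * 2 ^ (j - 1) := by
        rw [← pow_succ']; congr 1; omega
      rw [hpow] at htow3
      have : 0 < 2 ^ (j - 1) := pow_pos (show 0 < 2 by norm_num) (j - 1)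
      exact Nat.eq_of_mul_eq_mul_right this (by omega)
    obtain ⟨γ, hγ⟩ := Field.exists_primitive_element ↥E₂ ↥M
    have hγint : IsIntegral ↥E₂ γ := IsIntegral.of_finite _ _
    have hdγ : (minpoly ↥E₂ γ).natDegree = 2 := by
      rw [← IntermediateField.adjoin.finrank hγint, hγ, IntermediateField.finrank_top', hM2]
    exact quad_aux sqE2 γ hγint hdγ


lemma eq_quadratic_of_natDegree_le_two {R : Type*} [Field R] {g : R[X]}
    (h : g.natDegree ≤ 2) : g = C (g.coeff 2) * X ^ 2 + C (g.coeff 1) * X + C (g.coeff 0) := by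
  ext n
  rcases n with _ | _ | _ | n
  · simp [coeff_X_pow]
  · simp [coeff_X_pow]
  · simp [coeff_X_pow]
  · have h1 : g.coeff (n + 3) = 0 := coeff_eq_zero_of_natDegree_lt (by omega)
    have h2 : (C (g.coeff 2) * X ^ 2 + C (g.coeff 1) * X + C (g.coeff 0)).coeff (n + 3) = 0 := by
      simp [coeff_X_pow, coeff_C]
    rw [h1, h2]

lemma exists_nice_factor {R : Type*} [Field R] [LinearOrder R] [IsStrictOrderedRing R]
    (hsq' : ∀ y : R, 0 ≤ y → ∃ z : R, z * z = y)
    (hodd' : ∀ q : R[X], Odd q.natDegree → ∃ z : R, q.eval z = 0)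
    {p : R[X]} (hp1 : 1 ≤ p.natDegree) :
    (∃ a : R, (X - C a) ∣ p) ∨
    (∃ c d : R, d ≠ 0 ∧ ((X - C c) ^ 2 + C (d * d)) ∣ p) := by
  have hp0 : p ≠ 0 := fun h => by simp [h] at hp1
  have hpu : ¬ IsUnit p := fun h => by
    have := natDegree_eq_zero_of_isUnit h; omega
  obtain ⟨g, hgi, hgd⟩ := WfDvdMonoid.exists_irreducible_factor hpu hp0
  have hgdeg := irr_deg_le_two hsq' hodd' hgi
  have hgpos : 0 < g.natDegree := hgi.natDegree_pos
  by_cases hroot : ∃ z : R, g.eval z = 0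
  · obtain ⟨z, hz⟩ := hroot
    exact Or.inl ⟨z, dvd_trans (dvd_iff_isRoot.mpr hz) hgd⟩
  · push_neg at hroot
    -- no root: degree must be 2
    have hg2 : g.natDegree = 2 := by
      rcases (by omega : g.natDegree = 1 ∨ g.natDegree = 2) with h1 | h2
      · exfalso
        have hc1 : g.coeff 1 ≠ 0 := by
          have := leadingCoeff_ne_zero.mpr hgi.ne_zero
          rwa [leadingCoeff, h1] at this
        have hgform : g = C (g.coeff 1) * X + C (g.coeff 0) :=
          eq_X_add_C_of_degree_le_one (by rw [degree_eq_natDegree hgi.ne_zero, h1]; norm_num)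
        apply hroot (-(g.coeff 0) / g.coeff 1)
        rw [hgform]
        simp only [eval_add, eval_mul, eval_C, eval_X]
        simp only [coeff_add, coeff_C_mul, coeff_X_one, coeff_X_zero, coeff_C_zero,
          coeff_C_succ, mul_one, mul_zero, add_zero, zero_add]
        field_simp
        ring
      · exact h2
    have hA : g.coeff 2 ≠ 0 := by
      have := leadingCoeff_ne_zero.mpr hgi.ne_zero
      rwa [leadingCoeff, hg2] at this
    set A := g.coeff 2 with hAdef
    set cc := -(g.coeff 1 / A) / 2 with hccdef
    set dsq := g.coeff 0 / A - cc * cc with hdsqdef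
    -- evaluate g at cc + e for any e
    have heval : ∀ e : R, g.eval e = A * ((e - cc) * (e - cc) + dsq) := by
      intro e
      rw [eq_quadratic_of_natDegree_le_two hg2.le]
      simp only [eval_add, eval_mul, eval_C, eval_X, eval_pow]
      rw [hdsqdef, hccdef]
      field_simp
      ring
    have hdsqpos : 0 < dsq := by
      by_contra hle
      push_neg at hle
      obtain ⟨e, he⟩ := hsq' (-dsq) (by linarith)
      apply hroot (cc + e)
      rw [heval]
      have : (cc + e - cc) * (cc + e - cc) = -dsq := by rw [add_sub_cancel_left]; exact he
      rw [this]; ring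
    obtain ⟨d, hd⟩ := hsq' dsq hdsqpos.le
    have hd0 : d ≠ 0 := by
      intro h
      exact hdsqpos.ne' (by rw [← hd, h, mul_zero])
    have e1 : g.coeff 1 = A * (-2 * cc) := by
      rw [hccdef]; field_simp
    have e0 : g.coeff 0 = A * (cc * cc + d * d) := by
      rw [hd, hdsqdef]; field_simp; ring
    have hfac : g = ((X - C cc) ^ 2 + C (d * d)) * C A := by
      conv_lhs => rw [eq_quadratic_of_natDegree_le_two hg2.le]
      rw [e1, e0]
      simp only [C_mul, C_add, C_neg, map_ofNat]
      ring
    exact Or.inr ⟨cc, d, hd0, dvd_trans ⟨C A, hfac⟩ hgd⟩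


section snv
variable {K : Type*} [Field K] [LinearOrder K] [IsStrictOrderedRing K]

lemma nvr_mul {a b : K} (ha : a ∈ naturalValuationRing K) (hb : b ∈ naturalValuationRing K) :
    a * b ∈ naturalValuationRing K := by
  obtain ⟨n, hn⟩ := ha; obtain ⟨m, hm⟩ := hb
  refine ⟨n * m, ?_⟩
  rw [abs_mul]
  push_cast
  exact mul_le_mul hn hm (abs_nonneg b) (Nat.cast_nonneg n)

lemma snv_refl {b : K} : sameNatVal b b := by
  constructor <;>
  · refine ⟨1, ?_⟩
    rcases eq_or_ne b 0 with rfl | h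
    · simp
    · rw [div_self h]; simp

lemma snv_mul {y z b c : K} (h1 : sameNatVal y b) (h2 : sameNatVal z c) :
    sameNatVal (y * z) (b * c) := by
  constructor
  · have h : y * z / (b * c) = (y / b) * (z / c) := by rw [div_mul_div_comm]
    rw [h]; exact nvr_mul h1.1 h2.1
  · have h : b * c / (y * z) = (b / y) * (c / z) := by rw [div_mul_div_comm]
    rw [h]; exact nvr_mul h1.2 h2.2

lemma snv_inv {y b : K} (h : sameNatVal y b) : sameNatVal y⁻¹ b⁻¹ := by
  have e : ∀ u v : K, u⁻¹ / v⁻¹ = v / u := by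
    intro u v
    rw [div_eq_mul_inv, inv_inv, div_eq_mul_inv, mul_comm]
  exact ⟨e y b ▸ h.2, e b y ▸ h.1⟩

lemma snv_div {y z b c : K} (h1 : sameNatVal y b) (h2 : sameNatVal z c) :
    sameNatVal (y / z) (b / c) := by
  rw [div_eq_mul_inv, div_eq_mul_inv]
  exact snv_mul h1 (snv_inv h2)

lemma snv_add_aux {u v B C : K} {N M : ℕ} (hu : 0 < u) (hv : 0 < v) (hB : 0 < B) (hC : 0 < C)
    (hN : |u / B| ≤ (N : K)) (hM : |v / C| ≤ (M : K)) :
    |(u + v) / (B + C)| ≤ ((N + M : ℕ) : K) := by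
  have h1 : u ≤ N * B := by
    rw [abs_of_pos (div_pos hu hB)] at hN
    exact (div_le_iff₀ hB).mp hN
  have h2 : v ≤ M * C := by
    rw [abs_of_pos (div_pos hv hC)] at hM
    exact (div_le_iff₀ hC).mp hM
  rw [abs_of_pos (div_pos (add_pos hu hv) (add_pos hB hC)), div_le_iff₀ (add_pos hB hC)]
  push_cast
  nlinarith [Nat.cast_nonneg (α := K) N, Nat.cast_nonneg (α := K) M, hB.le, hC.le]

lemma snv_add_pos {y z b c : K} (hy : 0 < y) (hz : 0 < z) (hb : 0 < b) (hc : 0 < c)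
    (h1 : sameNatVal y b) (h2 : sameNatVal z c) : sameNatVal (y + z) (b + c) := by
  obtain ⟨⟨n, hn⟩, ⟨n', hn'⟩⟩ := h1
  obtain ⟨⟨m, hm⟩, ⟨m', hm'⟩⟩ := h2
  exact ⟨⟨n + m, snv_add_aux hy hz hb hc hn hm⟩,
    ⟨n' + m', snv_add_aux hb hc hy hz hn' hm'⟩⟩

end snv

lemma main_poly_val {K : Type*} [Field K] [LinearOrder K] [IsStrictOrderedRing K] (F : Subfield K)
    (hsq' : ∀ y : ↥F, 0 ≤ y → ∃ z : ↥F, z * z = y)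
    (hodd' : ∀ q : Polynomial ↥F, Odd q.natDegree → ∃ z : ↥F, q.eval z = 0)
    {x : K} (hx : x ∉ F)
    (H : ∀ a : K, a ∈ F → ∃ b : K, b ∈ F ∧ b ≠ 0 ∧ sameNatVal (x - a) b) :
    ∀ n : ℕ, ∀ p : Polynomial ↥F, p ≠ 0 → p.natDegree ≤ n →
      eval x (p.map F.subtype) ≠ 0 ∧
      ∃ b : K, b ∈ F ∧ b ≠ 0 ∧ sameNatVal (eval x (p.map F.subtype)) b := by
  intro n
  induction n with
  | zero =>
    intro p hp0 hpd
    have hc : p = C (p.coeff 0) := eq_C_of_natDegree_eq_zero (Nat.le_zero.mp hpd)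
    have hc0 : p.coeff 0 ≠ 0 := fun h => hp0 (by rw [hc, h, map_zero])
    have hev : eval x (p.map F.subtype) = ((p.coeff 0 : ↥F) : K) := by
      conv_lhs => rw [hc]
      rw [Polynomial.map_C, eval_C, Subfield.coe_subtype]
    refine ⟨by rw [hev]; exact_mod_cast hc0, ((p.coeff 0 : ↥F) : K), (p.coeff 0).2,
      by exact_mod_cast hc0, by rw [hev]; exact snv_refl⟩
  | succ n ih =>
    intro p hp0 hpd
    by_cases hle : p.natDegree ≤ n
    · exact ih p hp0 hle
    · have hd1 : 1 ≤ p.natDegree := by omega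
      rcases exists_nice_factor hsq' hodd' hd1 with ⟨a, t, ht⟩ | ⟨c, d, hd0, t, ht⟩
      · -- linear factor
        have hXa : (X - C a : Polynomial ↥F) ≠ 0 := X_sub_C_ne_zero a
        have ht0 : t ≠ 0 := by rintro rfl; rw [mul_zero] at ht; exact hp0 ht
        have hdeg : t.natDegree ≤ n := by
          have h2 : p.natDegree = 1 + t.natDegree := by
            rw [ht, natDegree_mul hXa ht0, natDegree_X_sub_C]
          omega
        obtain ⟨hev, b2, hb2F, hb2ne, hb2⟩ := ih t ht0 hdeg
        obtain ⟨b1, hb1F, hb1ne, hb1⟩ := H ↑a a.2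
        have hxan : x - ↑a ≠ 0 := sub_ne_zero.mpr (fun h => hx (h ▸ a.2))
        have hevp : eval x (p.map F.subtype)
            = (x - ↑a) * eval x (t.map F.subtype) := by
          rw [ht, Polynomial.map_mul, eval_mul]
          congr 1
          rw [Polynomial.map_sub, Polynomial.map_X, Polynomial.map_C, eval_sub, eval_X,
            eval_C, Subfield.coe_subtype]
        exact ⟨by rw [hevp]; exact mul_ne_zero hxan hev,
          b1 * b2, F.mul_mem hb1F hb2F, mul_ne_zero hb1ne hb2ne,
          by rw [hevp]; exact snv_mul hb1 hb2⟩
      · -- quadratic factor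
        set g : Polynomial ↥F := (X - C c) ^ 2 + C (d * d) with hg
        have hgdeg : g.natDegree = 2 := by
          rw [hg, natDegree_add_C, natDegree_pow, natDegree_X_sub_C]
        have hg0 : g ≠ 0 := fun h => by rw [h] at hgdeg; simp at hgdeg
        have ht0 : t ≠ 0 := by rintro rfl; rw [mul_zero] at ht; exact hp0 ht
        have hdeg : t.natDegree ≤ n := by
          have h2 : p.natDegree = 2 + t.natDegree := by
            rw [ht, natDegree_mul hg0 ht0, hgdeg]
          omega
        obtain ⟨hev, b2, hb2F, hb2ne, hb2⟩ := ih t ht0 hdeg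
        obtain ⟨b1, hb1F, hb1ne, hb1⟩ := H ↑c c.2
        have hxcn : x - ↑c ≠ 0 := sub_ne_zero.mpr (fun h => hx (h ▸ c.2))
        have hdK : ((d : ↥F) : K) ≠ 0 := by exact_mod_cast hd0
        have hevg : eval x (g.map F.subtype) = (x - ↑c) * (x - ↑c) + ↑d * ↑d := by
          simp only [hg, Polynomial.map_add, Polynomial.map_pow, Polynomial.map_sub,
            Polynomial.map_X, Polynomial.map_C, eval_add, eval_pow, eval_sub, eval_X,
            eval_C, map_mul, Subfield.coe_subtype, sq, Polynomial.map_mul, eval_mul]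
        have hy1 : 0 < (x - (c : K)) * (x - ↑c) := mul_self_pos.mpr hxcn
        have hy2 : 0 < ((d : ↥F) : K) * ↑d := mul_self_pos.mpr hdK
        have hb1abs : sameNatVal (x - ↑c) |b1| := by
          obtain ⟨⟨n1, hn1⟩, ⟨m1, hm1⟩⟩ := hb1
          constructor
          · exact ⟨n1, by rw [abs_div, abs_abs, ← abs_div]; exact hn1⟩
          · exact ⟨m1, by rw [abs_div, abs_abs, ← abs_div]; exact hm1⟩
        have hb1pos : 0 < |b1| := abs_pos.mpr hb1ne
        have hsnvg : sameNatVal (eval x (g.map F.subtype)) (|b1| * |b1| + ↑d * ↑d) := by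
          rw [hevg]
          exact snv_add_pos hy1 hy2 (mul_pos hb1pos hb1pos) hy2
            (snv_mul hb1abs hb1abs) snv_refl
        have hbF : |b1| * |b1| + ((d : ↥F) : K) * ↑d ∈ F := by
          rcases abs_choice b1 with h | h
          · rw [h]; exact F.add_mem (F.mul_mem hb1F hb1F) (F.mul_mem (d : ↥F).2 (d : ↥F).2)
          · rw [h]; exact F.add_mem (F.mul_mem (F.neg_mem hb1F) (F.neg_mem hb1F))
              (F.mul_mem (d : ↥F).2 (d : ↥F).2)
        have hbne : |b1| * |b1| + ((d : ↥F) : K) * ↑d ≠ 0 :=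
          (add_pos (mul_pos hb1pos hb1pos) hy2).ne'
        have hevp : eval x (p.map F.subtype)
            = eval x (g.map F.subtype) * eval x (t.map F.subtype) := by
          rw [ht, Polynomial.map_mul, eval_mul]
        refine ⟨by rw [hevp, hevg]; exact mul_ne_zero (add_pos hy1 hy2).ne' hev,
          (|b1| * |b1| + ↑d * ↑d) * b2, F.mul_mem hbF hb2F, mul_ne_zero hbne hb2ne,
          by rw [hevp]; exact snv_mul hsnvg hb2⟩

/-- Let `F ⊆ K` be ordered fields with `F` real closed, `w` the natural
valuation on `K`, and `x ∈ K \ F`.  If `w (F(x)×) ≠ w (F×)` then there is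
`a ∈ F` with `w (x - a) ∉ w (F×)`. -/
theorem exists_translate_with_new_value {K : Type*} [Field K] [LinearOrder K] [IsStrictOrderedRing K]
    (F : Subfield K)
    -- `F` is real closed: nonnegative elements of `F` are squares in `F`, and
    -- every odd-degree polynomial with coefficients in `F` has a root in `F`
    (hsq : ∀ y : K, y ∈ F → 0 ≤ y → ∃ z ∈ F, z * z = y)
    (hodd : ∀ p : Polynomial K, (∀ i, p.coeff i ∈ F) → Odd p.natDegree →
      ∃ z ∈ F, Polynomial.eval z p = 0)
    (x : K) (hx : x ∉ F)
    -- `w (F(x)×) ≠ w (F×)`: some nonzero element of `F(x)` has a value not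
    -- realized by any nonzero element of `F`
    (hval : ¬ ∀ y : K, y ∈ Subfield.closure ((F : Set K) ∪ {x}) → y ≠ 0 →
      ∃ b : K, b ∈ F ∧ b ≠ 0 ∧ sameNatVal y b) :
    ∃ a : K, a ∈ F ∧ ∀ b : K, b ∈ F → b ≠ 0 → ¬ sameNatVal (x - a) b := by
  by_contra hcon
  push_neg at hcon
  have H : ∀ a : K, a ∈ F → ∃ b : K, b ∈ F ∧ b ≠ 0 ∧ sameNatVal (x - a) b := hcon
  apply hval
  intro y hy hy0
  have hsq' : ∀ u : ↥F, 0 ≤ u → ∃ z : ↥F, z * z = u := by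
    intro u hu
    obtain ⟨z, hzF, hz⟩ := hsq ↑u u.2 (by exact_mod_cast hu)
    refine ⟨⟨z, hzF⟩, Subtype.ext ?_⟩
    push_cast
    exact hz
  have hodd' : ∀ q : Polynomial ↥F, Odd q.natDegree → ∃ w : ↥F, q.eval w = 0 := by
    intro q hq
    obtain ⟨z, hzF, hz⟩ := hodd (q.map F.subtype)
      (fun i => by rw [coeff_map, Subfield.coe_subtype]; exact (q.coeff i).2)
      (by rwa [natDegree_map])
    refine ⟨⟨z, hzF⟩, ?_⟩
    have h2 : F.subtype (q.eval ⟨z, hzF⟩) = 0 := by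
      rw [← eval₂_hom F.subtype, ← eval_map]
      exact hz
    rw [Subfield.coe_subtype] at h2
    exact_mod_cast h2
  -- rational function representation of y
  have hrep : ∃ P Q : Polynomial ↥F, eval x (Q.map F.subtype) ≠ 0 ∧
      y = eval x (P.map F.subtype) / eval x (Q.map F.subtype) := by
    clear hy0
    induction hy using Subfield.closure_induction with
    | mem w hw =>
      rcases hw with hw | hw
      · exact ⟨C ⟨w, hw⟩, 1, by simp, by simp [Subfield.coe_subtype]⟩
      · rcases hw with rfl
        exact ⟨X, 1, by simp, by simp⟩
    | one => exact ⟨1, 1, by simp, by simp⟩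
    | add y₁ y₂ h₁ h₂ ih₁ ih₂ =>
      obtain ⟨A, B, hB, rfl⟩ := ih₁
      obtain ⟨P, Q, hQ, rfl⟩ := ih₂
      refine ⟨A * Q + B * P, B * Q, ?_, ?_⟩
      · rw [Polynomial.map_mul, eval_mul]; exact mul_ne_zero hB hQ
      · rw [div_add_div _ _ hB hQ]
        simp only [Polynomial.map_add, Polynomial.map_mul, eval_add, eval_mul]
    | neg y₁ h₁ ih₁ =>
      obtain ⟨A, B, hB, rfl⟩ := ih₁
      exact ⟨-A, B, hB, by rw [Polynomial.map_neg, eval_neg, neg_div]⟩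
    | inv y₁ h₁ ih₁ =>
      obtain ⟨A, B, hB, rfl⟩ := ih₁
      rcases eq_or_ne (eval x (A.map F.subtype)) 0 with hA | hA
      · exact ⟨0, 1, by simp, by simp [hA]⟩
      · exact ⟨B, A, hA, by rw [inv_div]⟩
    | mul y₁ y₂ h₁ h₂ ih₁ ih₂ =>
      obtain ⟨A, B, hB, rfl⟩ := ih₁
      obtain ⟨P, Q, hQ, rfl⟩ := ih₂
      refine ⟨A * P, B * Q, ?_, ?_⟩
      · rw [Polynomial.map_mul, eval_mul]; exact mul_ne_zero hB hQ
      · rw [div_mul_div_comm]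
        simp only [Polynomial.map_mul, eval_mul]
  obtain ⟨P, Q, hQ, hyrep⟩ := hrep
  have hQ0 : Q ≠ 0 := fun h => hQ (by simp [h])
  have hP0 : P ≠ 0 := by
    rintro rfl
    apply hy0
    rw [hyrep]
    simp
  obtain ⟨hPev, bP, hbPF, hbPne, hbP⟩ :=
    main_poly_val F hsq' hodd' hx H P.natDegree P hP0 le_rfl
  obtain ⟨hQev, bQ, hbQF, hbQne, hbQ⟩ :=
    main_poly_val F hsq' hodd' hx H Q.natDegree Q hQ0 le_rfl
  exact ⟨bP / bQ, F.div_mem hbPF hbQF, div_ne_zero hbPne hbQne,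
    by rw [hyrep]; exact snv_div hbP hbQ⟩
end

section
/- Let F ⊆ K be valued fields with valuation w, F real closed (or more generally, with w(F×) the value group), and x ∈ K with w(x) ∉ w(F×). Then w(F(x)×) = w(F×) ⊕ ℤ·w(x), i.e., every element of w(F(x)×) is uniquely of the form γ + n·w(x) with γ ∈ w(F×), n ∈ ℤ. -/
open Polynomial

/-- Let `(K, v)` be a valued field, `F` a subfield whose value group `v (F×)`
is divisible, and `x ∈ K×` with `v x ∉ v (F×)`.  Then
`v (F(x)×) = v (F×) ⊕ ℤ · v x`: every value of a nonzero element of `F(x)` is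
of the form `v b * (v x) ^ n` with `b ∈ F×`, `n ∈ ℤ`, and the pair
`(v b, n)` is unique. -/
theorem value_group_of_simple_extension {K : Type*} [Field K]
    {Γ₀ : Type*} [LinearOrderedCommGroupWithZero Γ₀] (v : Valuation K Γ₀)
    (F : Subfield K)
    (hdiv : ∀ b : K, b ∈ F → b ≠ 0 → ∀ n : ℕ, 0 < n →
      ∃ c : K, c ∈ F ∧ c ≠ 0 ∧ v c ^ n = v b)
    (x : K) (hx0 : x ≠ 0)
    (hx : ∀ b : K, b ∈ F → b ≠ 0 → v x ≠ v b) :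
    ∀ y : K, y ∈ Subfield.closure ((F : Set K) ∪ {x}) → y ≠ 0 →
      (∃ b : K, b ∈ F ∧ b ≠ 0 ∧ ∃ n : ℤ, v y = v b * (v x) ^ n) ∧
      (∀ b b' : K, b ∈ F → b ≠ 0 → b' ∈ F → b' ≠ 0 → ∀ n n' : ℤ,
        v y = v b * (v x) ^ n → v y = v b' * (v x) ^ n' →
        v b = v b' ∧ n = n') := by
  have hvx : v x ≠ 0 := (Valuation.ne_zero_iff v).mpr hx0
  -- pow-injectivity in Γ₀
  have hpowinj : ∀ (a b : Γ₀) (k : ℕ), 0 < k → a ^ k = b ^ k → a = b := by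
    intro a b k hk h
    rcases lt_trichotomy a b with hlt | he | hlt
    · exact absurd h (ne_of_lt (pow_lt_pow_left₀ hlt (zero_le') hk.ne'))
    · exact he
    · exact absurd h.symm (ne_of_lt (pow_lt_pow_left₀ hlt (zero_le') hk.ne'))
  -- positive nat powers of v x avoid the value group of F
  have hA' : ∀ k : ℕ, 0 < k → ∀ d : K, d ∈ F → d ≠ 0 → (v x) ^ k ≠ v d := by
    intro k hk d hdF hd0 h
    obtain ⟨c, hcF, hc0, hc⟩ := hdiv d hdF hd0 k hk
    exact hx c hcF hc0 (hpowinj (v c) (v x) k hk (hc.trans h.symm)).symm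
  -- nonzero integer powers of v x avoid the value group of F
  have hA : ∀ m : ℤ, m ≠ 0 → ∀ d : K, d ∈ F → d ≠ 0 → (v x) ^ m ≠ v d := by
    intro m hm d hdF hd0 h
    rcases lt_or_gt_of_ne hm with hneg | hpos
    · apply hA' (-m).toNat (by omega) d⁻¹ (F.inv_mem hdF) (inv_ne_zero hd0)
      have hmn : (((-m).toNat : ℤ)) = -m := Int.toNat_of_nonneg (by omega)
      rw [map_inv₀, ← h, ← zpow_natCast, hmn, zpow_neg]
    · apply hA' m.toNat (by omega) d hdF hd0
      have hmn : ((m.toNat : ℤ)) = m := Int.toNat_of_nonneg (by omega)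
      rw [← zpow_natCast, hmn, h]
  -- independence
  have hB : ∀ b b' : K, b ∈ F → b ≠ 0 → b' ∈ F → b' ≠ 0 → ∀ n n' : ℤ,
      v b * (v x) ^ n = v b' * (v x) ^ n' → v b = v b' ∧ n = n' := by
    intro b b' hbF hb0 hb'F hb'0 n n' h
    have hvb : v b ≠ 0 := (Valuation.ne_zero_iff v).mpr hb0
    have hnn' : n = n' := by
      by_contra hne
      apply hA (n - n') (sub_ne_zero.mpr hne) (b' / b) (F.div_mem hb'F hbF)
        (div_ne_zero hb'0 hb0)
      rw [map_div₀, eq_div_iff hvb, zpow_sub₀ hvx, div_mul_eq_mul_div,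
        div_eq_iff (zpow_ne_zero _ hvx), mul_comm]
      exact h
    subst hnn'
    exact ⟨mul_right_cancel₀ (zpow_ne_zero _ hvx) h, rfl⟩
  -- value of a sum of elements with pairwise distinct values
  have hC : ∀ (s : Finset ℕ) (f : ℕ → K),
      (∀ i ∈ s, ∀ j ∈ s, i ≠ j → v (f i) ≠ v (f j)) → s.Nonempty →
      ∃ i ∈ s, v (∑ j ∈ s, f j) = v (f i) := by
    intro s
    induction s using Finset.cons_induction with
    | empty => intro f _ h; exact absurd h (by simp)
    | cons a s ha ih =>
      intro f hdist _
      rw [Finset.sum_cons]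
      rcases s.eq_empty_or_nonempty with rfl | hs
      · exact ⟨a, Finset.mem_cons_self a _, by simp⟩
      · obtain ⟨i, his, hi⟩ := ih f
          (fun i hi j hj => hdist i (Finset.mem_cons_of_mem hi) j (Finset.mem_cons_of_mem hj)) hs
        have hne : v (f a) ≠ v (∑ j ∈ s, f j) := by
          rw [hi]
          exact hdist a (Finset.mem_cons_self a s) i (Finset.mem_cons_of_mem his)
            (by rintro rfl; exact ha his)
        rw [Valuation.map_add_of_distinct_val v hne]
        rcases le_total (v (f a)) (v (∑ j ∈ s, f j)) with h | h
        · exact ⟨i, Finset.mem_cons_of_mem his, by rw [max_eq_right h, hi]⟩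
        · exact ⟨a, Finset.mem_cons_self a s, max_eq_left h⟩
  -- value of a nonzero polynomial in x over F
  have hD : ∀ p : F[X], aeval x p ≠ 0 →
      ∃ b : K, b ∈ F ∧ b ≠ 0 ∧ ∃ n : ℕ, v (aeval x p) = v b * (v x) ^ n := by
    intro p hp
    have hrepr : aeval x p = ∑ i ∈ p.support, (p.coeff i : K) * x ^ i := by
      rw [aeval_def, eval₂_eq_sum, Polynomial.sum]; rfl
    have hsupp : p.support.Nonempty := by
      rw [Finset.nonempty_iff_ne_empty]
      intro h
      rw [Polynomial.support_eq_empty] at h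
      rw [h, map_zero] at hp
      exact hp rfl
    have hcoeff : ∀ i ∈ p.support, ((p.coeff i : K)) ≠ 0 := by
      intro i hi h
      exact (Polynomial.mem_support_iff.mp hi) (by exact_mod_cast h)
    have hdist : ∀ i ∈ p.support, ∀ j ∈ p.support, i ≠ j →
        v ((p.coeff i : K) * x ^ i) ≠ v ((p.coeff j : K) * x ^ j) := by
      intro i hi j hj hij h
      rw [map_mul, map_mul, map_pow, map_pow, ← zpow_natCast (v x) i,
        ← zpow_natCast (v x) j] at h
      have := (hB _ _ (SetLike.coe_mem _) (hcoeff i hi) (SetLike.coe_mem _)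
        (hcoeff j hj) _ _ h).2
      exact hij (by exact_mod_cast this)
    obtain ⟨i, his, hi⟩ := hC p.support (fun i => (p.coeff i : K) * x ^ i) hdist hsupp
    exact ⟨(p.coeff i : K), SetLike.coe_mem _, hcoeff i his, i, by
      rw [hrepr, hi, map_mul, map_pow]⟩
  intro y hy hy0
  -- y = r(x) / s(x)
  obtain ⟨r, s, hrs⟩ : ∃ r s : F[X], y = aeval x r / aeval x s := by
    rw [← IntermediateField.mem_adjoin_simple_iff]
    have h : (F : Set K) = Set.range (algebraMap F K) := Subtype.range_coe.symm
    rw [h] at hy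
    exact hy
  have hsne : aeval x s ≠ 0 := by
    intro h; rw [h, div_zero] at hrs; exact hy0 hrs
  have hrne : aeval x r ≠ 0 := by
    intro h; rw [h, zero_div] at hrs; exact hy0 hrs
  obtain ⟨b, hbF, hb0, m, hm⟩ := hD r hrne
  obtain ⟨c, hcF, hc0, k, hk⟩ := hD s hsne
  refine ⟨⟨b / c, F.div_mem hbF hcF, div_ne_zero hb0 hc0, (m : ℤ) - k, ?_⟩, ?_⟩
  · rw [hrs, map_div₀, hm, hk, map_div₀, zpow_sub₀ hvx, zpow_natCast, zpow_natCast]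
    exact (div_mul_div_comm _ _ _ _).symm
  · intro b b' hb hb0 hb' hb'0 n n' h1 h2
    exact hB b b' hb hb0 hb' hb'0 n n' (h1.symm.trans h2)
end

section
/- Let (K, O) be an ordered valued field (O a convex valuation ring with maximal ideal m). Suppose the multiplicative group K^{>0} is divisible. Then K^{>0} decomposes as an internal direct product B · B' · (1 + m), where B is a group complement to (O×)^{>0} in K^{>0} and B' is a group complement to 1 + m in (O×)^{>0}, and B' is order-isomorphic to res(K)^{>0} via the residue map. -/
/-- The maximal ideal of a valuation subring `O` of a field: the set of
nonunits of `O`. -/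
def maxIdealSet {K : Type*} [Field K] (O : Subring K) : Set K :=
  {x | x ∈ O ∧ (x = 0 ∨ x⁻¹ ∉ O)}

/-- `B` is a subgroup of the multiplicative group `K×`. -/
def IsMulSubgroup {K : Type*} [Field K] (B : Set K) : Prop :=
  (1 : K) ∈ B ∧ (∀ a b : K, a ∈ B → b ∈ B → a * b ∈ B) ∧ (∀ a : K, a ∈ B → a⁻¹ ∈ B)

section Aux

lemma exists_mul_complement {G : Type*} [CommGroup G] (H : Subgroup G)
    (hr : ∀ h : H, ∀ n : ℕ, 0 < n → ∃ k : H, k ^ n = h) :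
    ∃ B : Subgroup G, (∀ g : G, ∃ b ∈ B, ∃ h ∈ H, g = b * h) ∧
      (∀ g : G, g ∈ B → g ∈ H → g = 1) := by
  letI : RootableBy H ℕ := rootableByOfPowLeftSurj _ _
    (fun {n} hn x => (hr x n (Nat.pos_of_ne_zero hn)).imp fun k hk => hk)
  letI : RootableBy H ℤ := Group.rootableByIntOfRootableByNat H
  letI : DivisibleBy (Additive ↥H) ℤ :=
    { div := fun a n => Additive.ofMul (RootableBy.root a.toMul n)
      div_zero := fun a => congrArg Additive.ofMul (RootableBy.root_zero (α := ℤ) a.toMul)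
      div_cancel := fun {n} a hn =>
        congrArg Additive.ofMul (RootableBy.root_cancel (α := ℤ) a.toMul hn) }
  have baer : Module.Baer ℤ (Additive ↥H) := Module.Baer.of_divisible _
  have inj : Module.Injective ℤ (Additive ↥H) := baer.injective
  obtain ⟨h, hh⟩ := inj.out ((MonoidHom.toAdditive H.subtype).toIntLinearMap)
    (fun a b hab => by
      have h2 : (a.toMul : H) = b.toMul := Subtype.ext (congrArg Additive.toMul hab)
      exact congrArg Additive.ofMul h2) LinearMap.id
  set ρ : G →* H := MonoidHom.toAdditive.symm h.toAddMonoidHom with hρ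
  have hρid : ∀ x : H, ρ (x : G) = x := fun x => hh (Additive.ofMul x)
  refine ⟨ρ.ker, ?_, ?_⟩
  · intro g
    refine ⟨g * ((ρ g : H) : G)⁻¹, ?_, (ρ g : H), (ρ g).2, by group⟩
    have : ρ (g * ((ρ g : H) : G)⁻¹) = 1 := by
      rw [map_mul, map_inv, hρid (ρ g), mul_inv_cancel]
    exact this
  · intro g hgB hgH
    have h1 : ρ g = 1 := hgB
    have h2 : ρ g = ⟨g, hgH⟩ := hρid ⟨g, hgH⟩
    exact congrArg Subtype.val (h2.symm.trans h1)

lemma complement_unique {G : Type*} [CommGroup G] {B H : Subgroup G}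
    (htriv : ∀ g : G, g ∈ B → g ∈ H → g = 1) {b₁ b₂ h₁ h₂ : G}
    (hb₁ : b₁ ∈ B) (hb₂ : b₂ ∈ B) (hh₁ : h₁ ∈ H) (hh₂ : h₂ ∈ H)
    (heq : b₁ * h₁ = b₂ * h₂) : b₁ = b₂ ∧ h₁ = h₂ := by
  have key : b₂⁻¹ * b₁ = h₂ * h₁⁻¹ := by
    have e1 : b₂ * (b₂⁻¹ * b₁) * h₁ = b₂ * (h₂ * h₁⁻¹) * h₁ := by
      rw [show b₂ * (b₂⁻¹ * b₁) * h₁ = b₁ * h₁ by group,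
        show b₂ * (h₂ * h₁⁻¹) * h₁ = b₂ * h₂ by group, heq]
    exact mul_left_cancel (mul_right_cancel e1)
  have h1 : b₂⁻¹ * b₁ = 1 := htriv _ (mul_mem (inv_mem hb₂) hb₁)
    (key ▸ mul_mem hh₂ (inv_mem hh₁))
  have hb : b₁ = b₂ := by
    have := inv_mul_eq_one.mp h1; exact this.symm
  refine ⟨hb, ?_⟩
  have h2 : h₂ * h₁⁻¹ = 1 := key ▸ h1
  have := mul_inv_eq_one.mp h2; exact this.symm

variable {K : Type*} [Field K] [LinearOrder K] [IsStrictOrderedRing K] {O : Subring K}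

lemma olf_mem_of_abs_le_abs
    (hconv : ∀ a b c : K, a ∈ O → c ∈ O → a ≤ b → b ≤ c → b ∈ O)
    {x c : K} (hc : c ∈ O) (h : |x| ≤ |c|) : x ∈ O := by
  have habs : |c| ∈ O := by
    rcases abs_choice c with h' | h' <;> rw [h']
    exacts [hc, O.neg_mem hc]
  exact hconv (-|c|) x |c| (O.neg_mem habs) habs
    (neg_le_of_abs_le h) (le_of_abs_le h)

lemma olf_m_neg {ε : K} (hε : ε ∈ maxIdealSet O) : -ε ∈ maxIdealSet O := by
  refine ⟨O.neg_mem hε.1, ?_⟩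
  rcases hε.2 with rfl | h
  · exact Or.inl neg_zero
  · right
    intro hmem
    apply h
    have : ε⁻¹ = -(-ε)⁻¹ := by rw [inv_neg, neg_neg]
    rw [this]
    exact O.neg_mem hmem

lemma olf_m_absorb {a ε : K} (ha : a ∈ O) (hε : ε ∈ maxIdealSet O) :
    a * ε ∈ maxIdealSet O := by
  refine ⟨O.mul_mem ha hε.1, ?_⟩
  by_cases hz : a * ε = 0
  · exact Or.inl hz
  · right
    intro hinv
    have hεne : ε ≠ 0 := fun h => hz (by rw [h, mul_zero])
    have hane : a ≠ 0 := fun h => hz (by rw [h, zero_mul])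
    have h := hε.2.resolve_left hεne
    apply h
    have : ε⁻¹ = a * (a * ε)⁻¹ := by field_simp
    rw [this]
    exact O.mul_mem ha hinv

lemma olf_two_mem : (2 : K) ∈ O := by
  rw [(by norm_num : (2 : K) = 1 + 1)]
  exact O.add_mem O.one_mem O.one_mem

lemma olf_m_small (hconv : ∀ a b c : K, a ∈ O → c ∈ O → a ≤ b → b ≤ c → b ∈ O)
    {ε : K} (hε : ε ∈ maxIdealSet O) : |ε| < 1 / 2 := by
  by_contra h
  push_neg at h
  have hne : ε ≠ 0 := by
    intro h0
    rw [h0, abs_zero] at h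
    norm_num at h
  have hinv : ε⁻¹ ∉ O := hε.2.resolve_left hne
  apply hinv
  have hlt : |ε⁻¹| ≤ |(2 : K)| := by
    rw [abs_inv, abs_two]
    rw [inv_le_comm₀ (abs_pos.mpr hne) (by norm_num : (0:K) < 2)]
    linarith
  exact olf_mem_of_abs_le_abs hconv olf_two_mem hlt

lemma olf_m_add (hconv : ∀ a b c : K, a ∈ O → c ∈ O → a ≤ b → b ≤ c → b ∈ O)
    {ε δ : K} (hε : ε ∈ maxIdealSet O) (hδ : δ ∈ maxIdealSet O) :
    ε + δ ∈ maxIdealSet O := by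
  have key : ∀ a b : K, a ∈ maxIdealSet O → b ∈ maxIdealSet O → |b| ≤ |a| →
      a + b ≠ 0 → (a + b)⁻¹ ∈ O → False := by
    intro a b ha hb hle hne hinv
    have hane : a ≠ 0 := by
      intro h0
      apply hne
      rw [h0, abs_zero] at hle
      have : b = 0 := abs_nonpos_iff.mp hle
      rw [h0, this, add_zero]
    have hA : (0:K) < |a| := abs_pos.mpr hane
    have hS : (0:K) < |a + b| := abs_pos.mpr hne
    have hainv : a⁻¹ ∉ O := ha.2.resolve_left hane
    apply hainv
    have hbd : 1 * |a + b| ≤ 2 * |a| := by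
      have := abs_add_le a b
      linarith
    have key2 : 1 / |a| ≤ 2 / |a + b| := (div_le_div_iff₀ hA hS).2 hbd
    have habs : |a⁻¹| ≤ |2 * (a + b)⁻¹| := by
      rw [abs_inv, abs_mul, abs_inv, abs_two, inv_eq_one_div, inv_eq_one_div,
        mul_one_div]
      exact key2
    exact olf_mem_of_abs_le_abs hconv (O.mul_mem olf_two_mem hinv) habs
  refine ⟨O.add_mem hε.1 hδ.1, ?_⟩
  by_cases h0 : ε + δ = 0
  · exact Or.inl h0
  · right
    intro hinv
    rcases le_total |δ| |ε| with hle | hle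
    · exact key ε δ hε hδ hle h0 hinv
    · exact key δ ε hδ hε hle (by rwa [add_comm]) (by rwa [add_comm])

lemma olf_root_mem (hconv : ∀ a b c : K, a ∈ O → c ∈ O → a ≤ b → b ≤ c → b ∈ O)
    {z x : K} (hz : 0 < z) (hx : x ∈ O) {n : ℕ} (hn : 0 < n) (h : z ^ n = x) :
    z ∈ O := by
  rcases le_or_gt z 1 with h1 | h1
  · exact hconv 0 z 1 O.zero_mem O.one_mem hz.le h1
  · have hzx : z ≤ x := h ▸ le_self_pow₀ h1.le hn.ne'
    exact hconv 0 z x O.zero_mem hx hz.le hzx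

lemma olf_one_add (hconv : ∀ a b c : K, a ∈ O → c ∈ O → a ≤ b → b ≤ c → b ∈ O)
    {ε : K} (hε : ε ∈ maxIdealSet O) :
    0 < 1 + ε ∧ (1 + ε) ∈ O ∧ (1 + ε)⁻¹ ∈ O ∧ (1 + ε)⁻¹ - 1 ∈ maxIdealSet O := by
  have hsmall := olf_m_small hconv hε
  have h1 := abs_lt.mp hsmall
  have hpos : 0 < 1 + ε := by linarith
  have hO : (1 + ε) ∈ O := O.add_mem O.one_mem hε.1
  have hinvle : (1 + ε)⁻¹ ≤ 2 := by
    rw [inv_le_comm₀ hpos (by norm_num : (0:K) < 2)]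
    linarith
  have hinvO : (1 + ε)⁻¹ ∈ O := by
    apply olf_mem_of_abs_le_abs hconv olf_two_mem
    rw [abs_two, abs_of_pos (inv_pos.mpr hpos)]
    exact hinvle
  refine ⟨hpos, hO, hinvO, ?_⟩
  have heq : (1 + ε)⁻¹ - 1 = (1 + ε)⁻¹ * (-ε) := by
    field_simp
    ring
  rw [heq]
  exact olf_m_absorb hinvO (olf_m_neg hε)

end Aux

/-- Lexicographic decomposition of the positive multiplicative group of an
ordered valued field `(K, O)` with `K^{>0}` divisible:
`K^{>0} = B · B' · (1 + m)` where `B` is a group complement to `(O×)^{>0}` in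
`K^{>0}`, `B'` is a group complement to `1 + m` in `(O×)^{>0}`, and `B'` is
order-isomorphic to `res(K)^{>0}` via the residue map. -/
theorem multiplicative_lexicographic_decomposition {K : Type*} [Field K] [LinearOrder K] [IsStrictOrderedRing K]
    (O : Subring K)
    (hconv : ∀ a b c : K, a ∈ O → c ∈ O → a ≤ b → b ≤ c → b ∈ O)
    (hval : ∀ x : K, x ≠ 0 → x ∈ O ∨ x⁻¹ ∈ O)
    (hdiv : ∀ y : K, 0 < y → ∀ n : ℕ, 0 < n → ∃ z : K, 0 < z ∧ z ^ n = y) :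
    ∃ B B' : Set K,
      IsMulSubgroup B ∧ IsMulSubgroup B' ∧
      -- `B ⊆ K^{>0}`, `B' ⊆ (O×)^{>0}`
      (∀ b : K, b ∈ B → 0 < b) ∧
      (∀ b : K, b ∈ B' → b ∈ O ∧ b⁻¹ ∈ O ∧ 0 < b) ∧
      -- existence of the decomposition of every positive element
      (∀ y : K, 0 < y → ∃ b ∈ B, ∃ b' ∈ B', ∃ ε ∈ maxIdealSet O,
        y = b * b' * (1 + ε)) ∧
      -- uniqueness of the decomposition (hence `B`, `B'` are complements)
      (∀ b₁ b₂ : K, b₁ ∈ B → b₂ ∈ B → ∀ b'₁ b'₂ : K, b'₁ ∈ B' → b'₂ ∈ B' →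
        ∀ ε₁ ε₂ : K, ε₁ ∈ maxIdealSet O → ε₂ ∈ maxIdealSet O →
        b₁ * b'₁ * (1 + ε₁) = b₂ * b'₂ * (1 + ε₂) →
        b₁ = b₂ ∧ b'₁ = b'₂ ∧ ε₁ = ε₂) ∧
      -- the residue map restricted to `B'` is an order isomorphism onto
      -- `res(K)^{>0}`: injective, surjective, and strictly order-preserving
      (∀ b c : K, b ∈ B' → c ∈ B' → b - c ∈ maxIdealSet O → b = c) ∧
      (∀ y : K, y ∈ O → 0 < y → y ∉ maxIdealSet O →
        ∃ b ∈ B', b - y ∈ maxIdealSet O) ∧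
      (∀ b c : K, b ∈ B' → c ∈ B' → b < c → c - b ∉ maxIdealSet O) := by
  classical
  -- the positive cone as a multiplicative group
  set G := {x : K // 0 < x} with hG
  -- the subgroup of positive units of O
  let H1 : Subgroup G :=
    { carrier := {g : G | (g : K) ∈ O ∧ ((g : K))⁻¹ ∈ O}
      one_mem' := ⟨O.one_mem, by simpa using O.one_mem⟩
      mul_mem' := fun {a b} ha hb => by
        refine ⟨O.mul_mem ha.1 hb.1, ?_⟩
        rw [Positive.val_mul, mul_inv]
        exact O.mul_mem ha.2 hb.2
      inv_mem' := fun {a} ha => by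
        refine ⟨ha.2, ?_⟩
        rw [Positive.coe_inv, inv_inv]
        exact ha.1 }
  have memH1 : ∀ g : G, g ∈ H1 ↔ (g : K) ∈ O ∧ ((g : K))⁻¹ ∈ O := fun g => Iff.rfl
  -- the subgroup 1 + m of G
  let H2 : Subgroup G :=
    { carrier := {g : G | (g : K) - 1 ∈ maxIdealSet O}
      one_mem' := by
        simp only [Set.mem_setOf_eq, Positive.val_one, sub_self]
        exact ⟨O.zero_mem, Or.inl rfl⟩
      mul_mem' := fun {a b} ha hb => by
        show ((a * b : G) : K) - 1 ∈ maxIdealSet O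
        rw [Positive.val_mul]
        have hbO : (b : K) ∈ O := by
          have h' : (b : K) = ((b : K) - 1) + 1 := by ring
          rw [h']
          exact O.add_mem hb.1 O.one_mem
        have heq : (a : K) * (b : K) - 1 = ((a : K) - 1) * (b : K) + ((b : K) - 1) := by
          ring
        rw [heq]
        exact olf_m_add hconv (by rw [mul_comm]; exact olf_m_absorb hbO ha) hb
      inv_mem' := fun {a} ha => by
        show ((a⁻¹ : G) : K) - 1 ∈ maxIdealSet O
        rw [Positive.coe_inv]
        have key := olf_one_add hconv (ha : (a : K) - 1 ∈ maxIdealSet O)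
        have heq : (1 : K) + ((a : K) - 1) = (a : K) := by ring
        rw [heq] at key
        exact key.2.2.2 }
  have memH2 : ∀ g : G, g ∈ H2 ↔ (g : K) - 1 ∈ maxIdealSet O := fun g => Iff.rfl
  -- rootability of H1
  have hH1root : ∀ h : H1, ∀ n : ℕ, 0 < n → ∃ k : H1, k ^ n = h := by
    intro h n hn
    obtain ⟨z, hz, hzn⟩ := hdiv ((h : G) : K) (h : G).2 n hn
    have hmem := h.2
    rw [memH1] at hmem
    have hzO : z ∈ O := olf_root_mem hconv hz hmem.1 hn hzn
    have hzinvO : z⁻¹ ∈ O := by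
      refine olf_root_mem hconv (inv_pos.mpr hz) hmem.2 hn ?_
      rw [inv_pow, hzn]
    refine ⟨⟨⟨z, hz⟩, by rw [memH1]; exact ⟨hzO, hzinvO⟩⟩, ?_⟩
    apply Subtype.ext
    rw [SubgroupClass.coe_pow]
    apply Subtype.ext
    rw [Positive.val_pow]
    exact hzn
  obtain ⟨B₁, hdec₁, htriv₁⟩ := exists_mul_complement H1 hH1root
  -- second level: complement of 1 + m inside H1
  let H2' : Subgroup ↥H1 := H2.comap H1.subtype
  have memH2' : ∀ g : ↥H1, g ∈ H2' ↔ ((g : G) : K) - 1 ∈ maxIdealSet O :=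
    fun g => Iff.rfl
  have hH2root : ∀ h : H2', ∀ n : ℕ, 0 < n → ∃ k : H2', k ^ n = h := by
    intro h n hn
    set x : K := (((h : ↥H1) : G) : K) with hx
    have hxpos : 0 < x := (((h : ↥H1) : G)).2
    have hmem1 := (h : ↥H1).2
    rw [memH1] at hmem1
    have hmem2 := h.2
    rw [memH2'] at hmem2
    obtain ⟨z, hz, hzn⟩ := hdiv x hxpos n hn
    have hzO : z ∈ O := olf_root_mem hconv hz hmem1.1 hn hzn
    have hzinvO : z⁻¹ ∈ O := by
      refine olf_root_mem hconv (inv_pos.mpr hz) hmem1.2 hn ?_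
      rw [inv_pow, hzn]
    -- z - 1 ∈ m via geometric sum
    have hzm : z - 1 ∈ maxIdealSet O := by
      set S : K := ∑ i ∈ Finset.range n, z ^ i with hS
      have hgeo : S * (z - 1) = z ^ n - 1 := geom_sum_mul z n
      have hS1 : (1 : K) ≤ S := by
        have h0 : (0 : ℕ) ∈ Finset.range n := Finset.mem_range.mpr hn
        calc (1 : K) = z ^ 0 := by rw [pow_zero]
        _ ≤ S := Finset.single_le_sum (fun i _ => (pow_pos hz i).le) h0
      have hSpos : (0 : K) < S := lt_of_lt_of_le one_pos hS1
      have hSinvO : S⁻¹ ∈ O := by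
        apply hconv 0 S⁻¹ 1 O.zero_mem O.one_mem (inv_pos.mpr hSpos).le
        rw [inv_le_one_iff₀]
        right; exact hS1
      have heq : z - 1 = S⁻¹ * (x - 1) := by
        rw [← hzn, ← hgeo]
        field_simp
      rw [heq]
      exact olf_m_absorb hSinvO hmem2
    refine ⟨⟨⟨⟨z, hz⟩, by rw [memH1]; exact ⟨hzO, hzinvO⟩⟩,
      by rw [memH2']; exact hzm⟩, ?_⟩
    apply Subtype.ext
    rw [SubgroupClass.coe_pow]
    apply Subtype.ext
    rw [SubgroupClass.coe_pow]
    apply Subtype.ext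
    rw [Positive.val_pow]
    exact hzn
  obtain ⟨B₂, hdec₂, htriv₂⟩ := exists_mul_complement H2' hH2root
  -- the sets
  refine ⟨{x : K | ∃ g : G, g ∈ B₁ ∧ (g : K) = x},
    {x : K | ∃ g : ↥H1, g ∈ B₂ ∧ ((g : G) : K) = x}, ?_, ?_, ?_, ?_, ?_, ?_, ?_, ?_, ?_⟩
  · -- B is a subgroup
    refine ⟨⟨1, B₁.one_mem, Positive.val_one⟩, ?_, ?_⟩
    · rintro a b ⟨g₁, hg₁, rfl⟩ ⟨g₂, hg₂, rfl⟩
      exact ⟨g₁ * g₂, B₁.mul_mem hg₁ hg₂, Positive.val_mul g₁ g₂⟩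
    · rintro a ⟨g, hg, rfl⟩
      exact ⟨g⁻¹, B₁.inv_mem hg, Positive.coe_inv g⟩
  · -- B' is a subgroup
    refine ⟨⟨1, B₂.one_mem, Positive.val_one⟩, ?_, ?_⟩
    · rintro a b ⟨g₁, hg₁, rfl⟩ ⟨g₂, hg₂, rfl⟩
      refine ⟨g₁ * g₂, B₂.mul_mem hg₁ hg₂, ?_⟩
      rw [Subgroup.coe_mul, Positive.val_mul]
    · rintro a ⟨g, hg, rfl⟩
      refine ⟨g⁻¹, B₂.inv_mem hg, ?_⟩
      rw [InvMemClass.coe_inv, Positive.coe_inv]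
  · -- B ⊆ K^{>0}
    rintro b ⟨g, _, rfl⟩
    exact g.2
  · -- B' ⊆ (O×)^{>0}
    rintro b ⟨g, _, rfl⟩
    have := g.2
    rw [memH1] at this
    exact ⟨this.1, this.2, ((g : G)).2⟩
  · -- existence of decomposition
    intro y hy
    obtain ⟨b, hbB, h, hhH1, heq⟩ := hdec₁ ⟨y, hy⟩
    obtain ⟨c, hcB, d, hdH2, heq2⟩ := hdec₂ ⟨h, hhH1⟩
    rw [memH2'] at hdH2
    refine ⟨(b : K), ⟨b, hbB, rfl⟩, ((c : G) : K), ⟨c, hcB, rfl⟩,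
      ((d : G) : K) - 1, hdH2, ?_⟩
    have hval1 : y = (b : K) * (h : K) := by
      have h' := congrArg Subtype.val heq
      rw [Positive.val_mul] at h'
      exact h'
    have hval2 : (h : K) = ((c : G) : K) * ((d : G) : K) := by
      have h' : (((c * d : ↥H1) : G) : K) = ((c : G) : K) * ((d : G) : K) := by
        rw [Subgroup.coe_mul, Positive.val_mul]
      rw [← heq2] at h'
      exact h'
    rw [hval1, hval2]
    ring
  · -- uniqueness
    rintro b₁ b₂ ⟨g₁, hg₁, rfl⟩ ⟨g₂, hg₂, rfl⟩ b'₁ b'₂ ⟨c₁, hc₁, rfl⟩ ⟨c₂, hc₂, rfl⟩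
      ε₁ ε₂ hε₁ hε₂ heq
    have h1p := olf_one_add hconv hε₁
    have h2p := olf_one_add hconv hε₂
    have he₁H1 : (⟨1 + ε₁, h1p.1⟩ : G) ∈ H1 := ⟨h1p.2.1, h1p.2.2.1⟩
    have he₂H1 : (⟨1 + ε₂, h2p.1⟩ : G) ∈ H1 := ⟨h2p.2.1, h2p.2.2.1⟩
    have hGeq : g₁ * ((c₁ : G) * ⟨1 + ε₁, h1p.1⟩) = g₂ * ((c₂ : G) * ⟨1 + ε₂, h2p.1⟩) := by
      apply Subtype.ext
      rw [Positive.val_mul, Positive.val_mul, Positive.val_mul, Positive.val_mul,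
        ← mul_assoc, ← mul_assoc]
      exact heq
    obtain ⟨hgeq, hueq⟩ := complement_unique htriv₁ hg₁ hg₂
      (H1.mul_mem c₁.2 he₁H1) (H1.mul_mem c₂.2 he₂H1) hGeq
    have hH1eq : c₁ * (⟨⟨1 + ε₁, h1p.1⟩, he₁H1⟩ : ↥H1) =
        c₂ * ⟨⟨1 + ε₂, h2p.1⟩, he₂H1⟩ := by
      apply Subtype.ext
      rw [Subgroup.coe_mul, Subgroup.coe_mul]
      exact hueq
    have he₁H2 : (⟨⟨1 + ε₁, h1p.1⟩, he₁H1⟩ : ↥H1) ∈ H2' := by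
      show (1 + ε₁) - 1 ∈ maxIdealSet O
      simpa using hε₁
    have he₂H2 : (⟨⟨1 + ε₂, h2p.1⟩, he₂H1⟩ : ↥H1) ∈ H2' := by
      show (1 + ε₂) - 1 ∈ maxIdealSet O
      simpa using hε₂
    obtain ⟨hceq, heeq⟩ := complement_unique htriv₂ hc₁ hc₂ he₁H2 he₂H2 hH1eq
    refine ⟨congrArg Subtype.val hgeq,
      congrArg (fun t : ↥H1 => ((t : G) : K)) hceq, ?_⟩
    have h' : (1 : K) + ε₁ = 1 + ε₂ :=
      congrArg (fun t : ↥H1 => ((t : G) : K)) heeq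
    exact add_left_cancel h'
  · -- residue injectivity
    rintro b c ⟨g, hg, rfl⟩ ⟨h, hh, rfl⟩ hsub
    have hhmem := h.2; rw [memH1] at hhmem
    have hw : g * h⁻¹ ∈ H2' := by
      rw [memH2']
      have hne : ((h : G) : K) ≠ 0 := ne_of_gt ((h : G)).2
      have : (((g * h⁻¹ : ↥H1) : G) : K) - 1 =
          (((h : G) : K))⁻¹ * ((((g : G)) : K) - ((h : G) : K)) := by
        rw [Subgroup.coe_mul, Positive.val_mul, InvMemClass.coe_inv, Positive.coe_inv]
        field_simp
      rw [this]
      exact olf_m_absorb hhmem.2 hsub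
    have := htriv₂ (g * h⁻¹) (B₂.mul_mem hg (B₂.inv_mem hh)) hw
    have hgh : g = h := by
      have := mul_inv_eq_one.mp this
      exact this
    rw [hgh]
  · -- residue surjectivity
    intro y hyO hypos hym
    have hyinv : y⁻¹ ∈ O := by
      by_contra hcon
      exact hym ⟨hyO, Or.inr hcon⟩
    obtain ⟨c, hcB, d, hdH2, heq2⟩ := hdec₂ ⟨⟨y, hypos⟩, by rw [memH1]; exact ⟨hyO, hyinv⟩⟩
    rw [memH2'] at hdH2
    refine ⟨((c : G) : K), ⟨c, hcB, rfl⟩, ?_⟩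
    have hcmem := c.2; rw [memH1] at hcmem
    have hval2 : y = ((c : G) : K) * ((d : G) : K) := by
      have h' : (((c * d : ↥H1) : G) : K) = ((c : G) : K) * ((d : G) : K) := by
        rw [Subgroup.coe_mul, Positive.val_mul]
      rw [← heq2] at h'
      exact h'
    have heq3 : ((c : G) : K) - y = -(((c : G) : K) * (((d : G) : K) - 1)) := by
      rw [hval2]; ring
    rw [heq3]
    exact olf_m_neg (olf_m_absorb hcmem.1 hdH2)
  · -- strict order preservation
    rintro b c hbB hcB hlt hmem
    -- use injectivity: c - b ∈ m implies c = b
    obtain ⟨g, hg, rfl⟩ := hbB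
    obtain ⟨h, hh, rfl⟩ := hcB
    -- reuse the injectivity argument with roles swapped
    have hgmem := g.2; rw [memH1] at hgmem
    have hw : h * g⁻¹ ∈ H2' := by
      rw [memH2']
      have hne : ((g : G) : K) ≠ 0 := ne_of_gt ((g : G)).2
      have : (((h * g⁻¹ : ↥H1) : G) : K) - 1 =
          (((g : G) : K))⁻¹ * ((((h : G)) : K) - ((g : G) : K)) := by
        rw [Subgroup.coe_mul, Positive.val_mul, InvMemClass.coe_inv, Positive.coe_inv]
        field_simp
      rw [this]
      exact olf_m_absorb hgmem.2 hmem
    have := htriv₂ (h * g⁻¹) (B₂.mul_mem hh (B₂.inv_mem hg)) hw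
    have hgh : h = g := mul_inv_eq_one.mp this
    rw [hgh] at hlt
    exact lt_irrefl _ hlt
end

section
/- Let (K, O) be an ordered valued field. Then the additive group of K decomposes as K = A ⊕ A' ⊕ m, where A is a group complement to O in (K, +), A' is a group complement to m in (O, +), and A' is isomorphic (as an ordered group, via the residue map) to the additive group of res(K). -/
/-- `A` is a subgroup of the additive group `(K, +)`. -/
def IsAddSubgroupSet {K : Type*} [Field K] (A : Set K) : Prop :=
  (0 : K) ∈ A ∧ (∀ a b : K, a ∈ A → b ∈ A → a + b ∈ A) ∧ (∀ a : K, a ∈ A → -a ∈ A)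

section aux
variable {K : Type*} [Field K] [LinearOrder K] [IsStrictOrderedRing K] (O : Subring K)

lemma aux_rat_mem (hconv : ∀ a b c : K, a ∈ O → c ∈ O → a ≤ b → b ≤ c → b ∈ O)
    (q : ℚ) : (q : K) ∈ O := by
  have hq2 : q ≤ ((⌈|q|⌉:ℤ) : ℚ) := le_trans (le_abs_self q) (Int.le_ceil |q|)
  have hq1 : ((-⌈|q|⌉:ℤ) : ℚ) ≤ q := by
    have h := Int.le_ceil |q|
    have h2 := neg_abs_le q
    push_cast
    linarith
  have h1 : ((-⌈|q|⌉ : ℤ) : K) ≤ (q : K) := by exact_mod_cast hq1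
  have h2 : (q : K) ≤ ((⌈|q|⌉ : ℤ) : K) := by exact_mod_cast hq2
  exact hconv _ _ _ (intCast_mem O _) (intCast_mem O _) h1 h2

lemma aux_m_ne (x : K) (hx : x⁻¹ ∉ O) : x ≠ 0 := by
  rintro rfl; exact hx (by simpa using O.zero_mem)

lemma aux_m_add (hval : ∀ x : K, x ≠ 0 → x ∈ O ∨ x⁻¹ ∈ O)
    {x y : K} (hx : x ∈ maxIdealSet O) (hy : y ∈ maxIdealSet O) :
    x + y ∈ maxIdealSet O := by
  rcases hx with ⟨hxO, hx⟩
  rcases hy with ⟨hyO, hy⟩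
  rcases hx with rfl | hxi
  · simpa using ⟨hyO, hy⟩
  rcases hy with rfl | hyi
  · simpa using ⟨hxO, Or.inr hxi⟩
  have hx0 : x ≠ 0 := aux_m_ne O x hxi
  have hy0 : y ≠ 0 := aux_m_ne O y hyi
  refine ⟨O.add_mem hxO hyO, or_iff_not_imp_left.mpr fun hs hsi => ?_⟩
  rcases hval (x⁻¹ * y) (by simp [hx0, hy0]) with ht | ht
  · apply hxi
    have : x⁻¹ = (x + y)⁻¹ * (1 + x⁻¹ * y) := by
      field_simp
    rw [this]
    exact O.mul_mem hsi (O.add_mem O.one_mem ht)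
  · apply hyi
    rw [mul_inv, inv_inv] at ht
    have : y⁻¹ = (x + y)⁻¹ * (1 + y⁻¹ * x) := by
      field_simp; ring
    rw [this]
    exact O.mul_mem hsi (O.add_mem O.one_mem (by rwa [mul_comm] at ht))
end aux

/-- Lexicographic decomposition of the additive group of an ordered valued
field `(K, O)`: `K = A ⊕ A' ⊕ m`, where `A` is a group complement to `O` in
`(K,+)`, `A'` is a group complement to `m` in `(O,+)`, and `A'` is
order-isomorphic, via the residue map, to the additive group of `res(K)`. -/
theorem additive_lexicographic_decomposition {K : Type*} [Field K] [LinearOrder K] [IsStrictOrderedRing K]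
    (O : Subring K)
    (hconv : ∀ a b c : K, a ∈ O → c ∈ O → a ≤ b → b ≤ c → b ∈ O)
    (hval : ∀ x : K, x ≠ 0 → x ∈ O ∨ x⁻¹ ∈ O) :
    ∃ A A' : Set K,
      IsAddSubgroupSet A ∧ IsAddSubgroupSet A' ∧
      -- `A' ⊆ O`
      (∀ a : K, a ∈ A' → a ∈ O) ∧
      -- existence of the decomposition of every element of `K`
      (∀ y : K, ∃ a ∈ A, ∃ a' ∈ A', ∃ ε ∈ maxIdealSet O, y = a + a' + ε) ∧
      -- uniqueness of the decomposition (hence `A`, `A'` are complements)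
      (∀ a₁ a₂ : K, a₁ ∈ A → a₂ ∈ A → ∀ a'₁ a'₂ : K, a'₁ ∈ A' → a'₂ ∈ A' →
        ∀ ε₁ ε₂ : K, ε₁ ∈ maxIdealSet O → ε₂ ∈ maxIdealSet O →
        a₁ + a'₁ + ε₁ = a₂ + a'₂ + ε₂ → a₁ = a₂ ∧ a'₁ = a'₂ ∧ ε₁ = ε₂) ∧
      -- the residue map restricted to `A'` is an isomorphism of ordered
      -- additive groups onto `res(K)`: injective, surjective, and strictly
      -- order-preserving
      (∀ a b : K, a ∈ A' → b ∈ A' → a - b ∈ maxIdealSet O → a = b) ∧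
      (∀ y : K, y ∈ O → ∃ a ∈ A', y - a ∈ maxIdealSet O) ∧
      (∀ a b : K, a ∈ A' → b ∈ A' → a < b → b - a ∉ maxIdealSet O) := by
  classical
  have hqO : ∀ (q : ℚ) (x : K), x ∈ O → q • x ∈ O := by
    intro q x hx
    rw [Rat.smul_def]
    exact O.mul_mem (aux_rat_mem O hconv q) hx
  let Osub : Submodule ℚ K :=
    { carrier := O
      add_mem' := fun ha hb => O.add_mem ha hb
      zero_mem' := O.zero_mem
      smul_mem' := fun q x hx => hqO q x hx }
  let mO : Submodule ℚ K :=
    { carrier := maxIdealSet O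
      add_mem' := fun ha hb => aux_m_add O hval ha hb
      zero_mem' := ⟨O.zero_mem, Or.inl rfl⟩
      smul_mem' := by
        intro q x hx
        rcases eq_or_ne q 0 with rfl | hq
        · rw [zero_smul]; exact ⟨O.zero_mem, Or.inl rfl⟩
        rcases hx with ⟨hxO, hx⟩
        rcases hx with rfl | hxi
        · rw [smul_zero]; exact ⟨O.zero_mem, Or.inl rfl⟩
        rw [Rat.smul_def]
        refine ⟨O.mul_mem (aux_rat_mem O hconv q) hxO, Or.inr fun h => hxi ?_⟩
        have hq0 : (q : K) ≠ 0 := by exact_mod_cast hq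
        have : x⁻¹ = (q : K) * ((q : K) * x)⁻¹ := by
          rw [mul_inv, ← mul_assoc, mul_inv_cancel₀ hq0, one_mul]
        rw [this]
        exact O.mul_mem (aux_rat_mem O hconv q) h }
  have hmO : mO ≤ Osub := fun x hx => hx.1
  obtain ⟨A, hA⟩ := Submodule.exists_isCompl Osub
  obtain ⟨C, hC⟩ := Submodule.exists_isCompl mO
  set A' : Submodule ℚ K := C ⊓ Osub with hA'def
  have hsup : mO ⊔ A' = Osub := by
    rw [hA'def, ← sup_inf_assoc_of_le C hmO, hC.codisjoint.eq_top, top_inf_eq]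
  have hinf : A' ⊓ mO = ⊥ := by
    apply le_antisymm _ bot_le
    intro x hx
    have hx2 : x ∈ mO ⊓ C := ⟨hx.2, hx.1.1⟩
    rwa [hC.disjoint.eq_bot] at hx2
  have hAinf : ∀ x : K, x ∈ A → x ∈ Osub → x = 0 := by
    intro x hx hxO
    have : x ∈ Osub ⊓ A := ⟨hxO, hx⟩
    rw [hA.disjoint.eq_bot] at this
    simpa using this
  have hA'inf : ∀ x : K, x ∈ A' → x ∈ maxIdealSet O → x = 0 := by
    intro x hx hxm
    have : x ∈ A' ⊓ mO := ⟨hx, hxm⟩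
    rw [hinf] at this
    simpa using this
  -- decomposition of elements of O
  have hOdec : ∀ y : K, y ∈ O → ∃ a' ∈ A', ∃ ε ∈ maxIdealSet O, y = a' + ε := by
    intro y hy
    have : y ∈ mO ⊔ A' := by rw [hsup]; exact hy
    obtain ⟨ε, hε, a', ha', hsum⟩ := Submodule.mem_sup.mp this
    exact ⟨a', ha', ε, hε, by rw [← hsum]; ring⟩
  refine ⟨(A : Set K), (A' : Set K),
    ⟨A.zero_mem, fun a b ha hb => A.add_mem ha hb, fun a ha => A.neg_mem ha⟩,
    ⟨A'.zero_mem, fun a b ha hb => A'.add_mem ha hb, fun a ha => A'.neg_mem ha⟩,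
    fun a ha => ha.2, ?_, ?_, ?_, ?_, ?_⟩
  · -- existence
    intro y
    have : y ∈ Osub ⊔ A := by rw [hA.codisjoint.eq_top]; trivial
    obtain ⟨o, ho, a, ha, hsum⟩ := Submodule.mem_sup.mp this
    obtain ⟨a', ha', ε, hε, hodec⟩ := hOdec o ho
    exact ⟨a, ha, a', ha', ε, hε, by rw [← hsum, hodec]; ring⟩
  · -- uniqueness
    intro a₁ a₂ ha₁ ha₂ a'₁ a'₂ ha'₁ ha'₂ ε₁ ε₂ hε₁ hε₂ heq
    have h12 : a₁ - a₂ = (a'₂ + ε₂) - (a'₁ + ε₁) := by linarith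
    have hmem : a₁ - a₂ ∈ Osub := by
      rw [h12]
      exact Osub.sub_mem (Osub.add_mem ha'₂.2 hε₂.1) (Osub.add_mem ha'₁.2 hε₁.1)
    have ha12 : a₁ = a₂ := by
      have := hAinf _ (A.sub_mem ha₁ ha₂) hmem
      linarith [sub_eq_zero.mp this]
    subst ha12
    have h34 : a'₁ - a'₂ = ε₂ - ε₁ := by linarith
    have hmem2 : a'₁ - a'₂ ∈ maxIdealSet O := by
      rw [h34]
      exact mO.sub_mem hε₂ hε₁
    have : a'₁ = a'₂ := by
      have := hA'inf _ (A'.sub_mem ha'₁ ha'₂) hmem2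
      linarith [sub_eq_zero.mp this]
    exact ⟨rfl, this, by linarith⟩
  · -- injectivity
    intro a b ha hb hab
    have := hA'inf _ (A'.sub_mem ha hb) hab
    linarith [sub_eq_zero.mp this]
  · -- surjectivity
    intro y hy
    obtain ⟨a', ha', ε, hε, hdec⟩ := hOdec y hy
    exact ⟨a', ha', by rw [hdec]; simpa using hε⟩
  · -- strict order preservation
    intro a b ha hb hlt hmem
    have := hA'inf _ (A'.sub_mem hb ha) hmem
    have : b = a := by linarith [sub_eq_zero.mp this]
    exact absurd this (ne_of_gt hlt)
end

section
/- Let O be a convex valuation subring of an ordered field K with maximal ideal m, let exp : O → O satisfy the axioms: exp(x+y) = exp(x)exp(y), exp strictly increasing, exp(m) ⊆ 1 + m, exp(O) = (O×)^{>0}. Suppose x ∈ O× with x > 0 and res(x) does not lie in res(O_H) for a subring O_H of O which is closed under exp. Then for every a ∈ O_H, res(log x − a) ∉ res(O_H), where log is the inverse of exp on (O×)^{>0}. -/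
/-- Let `exp : (O,+) → ((O×)^{>0},·)` be a strictly increasing isomorphism with
`exp (m) ⊆ 1 + m` and inverse `log`, and let `O_H ⊆ O` be a subring closed under
`exp`.  If `x ∈ (O×)^{>0}` and `res x ∉ res (O_H)`, then for every `a ∈ O_H`,
`res (log x - a) ∉ res (O_H)`. -/
theorem residue_of_log_avoids_subring {K : Type*} [Field K] [LinearOrder K] [IsStrictOrderedRing K]
    (O : Subring K)
    (hconv : ∀ a b c : K, a ∈ O → c ∈ O → a ≤ b → b ≤ c → b ∈ O)
    (hval : ∀ x : K, x ≠ 0 → x ∈ O ∨ x⁻¹ ∈ O)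
    (exp log : K → K)
    (hmap : ∀ x : K, x ∈ O → exp x ∈ O)
    (hom : ∀ x y : K, x ∈ O → y ∈ O → exp (x + y) = exp x * exp y)
    (hmono : ∀ x y : K, x ∈ O → y ∈ O → x < y → exp x < exp y)
    (hinf : ∀ ε : K, ε ∈ maxIdealSet O → exp ε - 1 ∈ maxIdealSet O)
    (himage : ∀ y : K, (∃ x : K, x ∈ O ∧ exp x = y) ↔ (y ∈ O ∧ y⁻¹ ∈ O ∧ 0 < y))
    (hlog : ∀ y : K, y ∈ O → y⁻¹ ∈ O → 0 < y → log y ∈ O ∧ exp (log y) = y)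
    (OH : Subring K) (hOH : (OH : Set K) ⊆ (O : Set K))
    (hexpcl : ∀ h : K, h ∈ OH → exp h ∈ OH)
    (x : K) (hxO : x ∈ O) (hxu : x⁻¹ ∈ O) (hxpos : 0 < x)
    (hres : ∀ h : K, h ∈ OH → x - h ∉ maxIdealSet O) :
    ∀ a : K, a ∈ OH → ∀ h : K, h ∈ OH → (log x - a) - h ∉ maxIdealSet O := by
  intro a ha h hh hm
  obtain ⟨hlO, hle⟩ := hlog x hxO hxu hxpos
  have hahOH : a + h ∈ OH := add_mem ha hh
  have hahO : a + h ∈ O := hOH hahOH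
  have hεO : (log x - a) - h ∈ O := sub_mem (sub_mem hlO (hOH ha)) (hOH hh)
  -- δ := exp ε - 1 ∈ m
  have hδ := hinf _ hm
  set ε : K := (log x - a) - h with hε
  set δ : K := exp ε - 1 with hδdef
  have hsplit : log x = (a + h) + ε := by ring
  have hx : x = exp (a + h) * (1 + δ) := by
    have : exp ((a + h) + ε) = exp (a + h) * exp ε := hom _ _ hahO hεO
    rw [← hsplit, hle] at this
    rw [this, hδdef]; ring
  have heOH : exp (a + h) ∈ OH := hexpcl _ hahOH
  have heO : exp (a + h) ∈ O := hOH heOH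
  apply hres (exp (a + h)) heOH
  have hxe : x - exp (a + h) = exp (a + h) * δ := by rw [hx]; ring
  rw [hxe]
  -- m is an ideal: O * m ⊆ m
  refine ⟨mul_mem heO hδ.1, ?_⟩
  rcases hδ.2 with h0 | hni
  · left; rw [h0, mul_zero]
  · by_cases hz : exp (a + h) * δ = 0
    · left; exact hz
    · right
      intro hinv
      apply hni
      have hd0 : δ ≠ 0 := by intro h0; exact hz (by rw [h0, mul_zero])
      have he0 : exp (a + h) ≠ 0 := fun h0 => hz (by rw [h0, zero_mul])
      have : δ⁻¹ = exp (a + h) * (exp (a + h) * δ)⁻¹ := by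
        field_simp
      rw [this]
      exact mul_mem heO hinv
end
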